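/- arXiv:2402.05689 — 5 statements merged into one kernel-verified Lean document; each statement's English description precedes it below -/
import Mathlib

section
/- Let P be a row-stochastic matrix on a finite state space S that is an aperiodic unichain with unique stationary distribution μ, and let Ξ be the matrix all of whose rows equal μ. Then the series W = Σ_{k=0}^∞ (P − Ξ)^k (Pᵀ − Ξᵀ)^k converges absolutely, and the limit W is a symmetric positive definite matrix all of whose eigenvalues are at least 1. -/
open Finset Matrix

open Filter in
private lemma aux_geom {S : Type*} [Fintype S] [DecidableEq S] (Q : Matrix S S ℝ)
    (h : ∀ s s', Tendsto (fun k => (Q ^ k) s s') atTop (nhds 0)) :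
    ∃ C t : ℝ, 0 ≤ C ∧ 0 < t ∧ t < 1 ∧ ∀ (k : ℕ) (s s' : S), |(Q ^ k) s s'| ≤ C * t ^ k := by
  set f : ℕ → ℝ := fun k => ∑ s, ∑ s', |(Q ^ k) s s'| with hf
  have hf0 : ∀ k, 0 ≤ f k := fun k =>
    Finset.sum_nonneg fun s _ => Finset.sum_nonneg fun s' _ => abs_nonneg _
  have hrowle : ∀ (k : ℕ) (s : S), (∑ s', |(Q ^ k) s s'|) ≤ f k := by
    intro k s
    exact Finset.single_le_sum (f := fun s => ∑ s', |(Q ^ k) s s'|)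
      (fun i _ => Finset.sum_nonneg fun j _ => abs_nonneg _) (Finset.mem_univ s)
  have hentry : ∀ k s s', |(Q ^ k) s s'| ≤ f k := by
    intro k s s'
    exact le_trans (Finset.single_le_sum (f := fun s' => |(Q ^ k) s s'|) (fun i _ => abs_nonneg _) (Finset.mem_univ s'))
      (hrowle k s)
  have hsub : ∀ a b, f (a + b) ≤ f a * f b := by
    intro a b
    have step1 : f (a + b) ≤ ∑ s, ∑ u, ∑ x, |(Q ^ a) s x| * |(Q ^ b) x u| := by
      refine Finset.sum_le_sum fun s _ => Finset.sum_le_sum fun u _ => ?_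
      rw [pow_add, Matrix.mul_apply]
      calc |∑ x, (Q ^ a) s x * (Q ^ b) x u| ≤ ∑ x, |(Q ^ a) s x * (Q ^ b) x u| :=
            Finset.abs_sum_le_sum_abs _ _
        _ = ∑ x, |(Q ^ a) s x| * |(Q ^ b) x u| := by simp [abs_mul]
    have step2 : ∑ s, ∑ u, ∑ x, |(Q ^ a) s x| * |(Q ^ b) x u|
        = ∑ s, ∑ x, |(Q ^ a) s x| * ∑ u, |(Q ^ b) x u| := by
      refine Finset.sum_congr rfl fun s _ => ?_
      rw [Finset.sum_comm]
      exact Finset.sum_congr rfl fun x _ => by rw [Finset.mul_sum]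
    have step3 : ∑ s, ∑ x, |(Q ^ a) s x| * ∑ u, |(Q ^ b) x u| ≤ f a * f b := by
      calc ∑ s, ∑ x, |(Q ^ a) s x| * ∑ u, |(Q ^ b) x u|
          ≤ ∑ s, ∑ x : S, |(Q ^ a) s x| * f b :=
            Finset.sum_le_sum fun s _ => Finset.sum_le_sum fun x _ =>
              mul_le_mul_of_nonneg_left (hrowle b x) (abs_nonneg _)
        _ = (∑ s, ∑ x, |(Q ^ a) s x|) * f b := by
            rw [Finset.sum_mul]
            exact Finset.sum_congr rfl fun s _ => (Finset.sum_mul _ _ _).symm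
        _ = f a * f b := rfl
    linarith
  have hftend : Tendsto f atTop (nhds 0) := by
    have habs : ∀ s s', Tendsto (fun k => |(Q ^ k) s s'|) atTop (nhds 0) := by
      intro s s'
      simpa using (h s s').abs
    have : Tendsto f atTop (nhds (∑ s : S, ∑ s' : S, (0 : ℝ))) :=
      tendsto_finset_sum _ fun s _ => tendsto_finset_sum _ fun s' _ => habs s s'
    simpa using this
  obtain ⟨N0, hN0⟩ := (Metric.tendsto_atTop.mp hftend) (1 / 2) (by norm_num)
  set N : ℕ := N0 + 1 with hNdef
  have hNpos : 0 < N := Nat.succ_pos _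
  have hfN : f N ≤ 1 / 2 := by
    have := hN0 N (Nat.le_succ _)
    rw [Real.dist_eq, sub_zero] at this
    calc f N ≤ |f N| := le_abs_self _
      _ ≤ 1 / 2 := this.le
  set t : ℝ := (1 / 2 : ℝ) ^ ((N : ℝ)⁻¹) with htdef
  have ht0 : 0 < t := Real.rpow_pos_of_pos (by norm_num) _
  have ht1 : t < 1 := Real.rpow_lt_one (by norm_num) (by norm_num)
    (by positivity)
  have htN : t ^ N = 1 / 2 := by
    rw [htdef, ← Real.rpow_natCast ((1 / 2 : ℝ) ^ ((N : ℝ)⁻¹)) N,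
      ← Real.rpow_mul (by norm_num), inv_mul_cancel₀ (by exact_mod_cast hNpos.ne'),
      Real.rpow_one]
  set B : ℝ := ∑ j ∈ Finset.range N, f j with hBdef
  have hB : ∀ j < N, f j ≤ B :=
    fun j hj => Finset.single_le_sum (fun i _ => hf0 i) (Finset.mem_range.mpr hj)
  have hBnn : 0 ≤ B := Finset.sum_nonneg fun i _ => hf0 i
  set C : ℝ := (B + 1) / t ^ (N - 1) with hCdef
  have hCpos : 0 < C := div_pos (by linarith) (pow_pos ht0 _)
  refine ⟨C, t, hCpos.le, ht0, ht1, ?_⟩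
  have key : ∀ k, f k ≤ C * t ^ k := by
    intro k
    induction k using Nat.strong_induction_on with
    | _ k ih =>
      rcases lt_or_ge k N with hk | hk
      · have h1 : f k ≤ B + 1 := le_trans (hB k hk) (by linarith)
        have h2 : (B + 1) = C * t ^ (N - 1) := by
          rw [hCdef, div_mul_cancel₀]
          exact (pow_pos ht0 _).ne'
        have h3 : t ^ (N - 1) ≤ t ^ k :=
          pow_le_pow_of_le_one ht0.le ht1.le (by omega)
        calc f k ≤ C * t ^ (N - 1) := by rw [← h2]; exact h1
          _ ≤ C * t ^ k := mul_le_mul_of_nonneg_left h3 hCpos.le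
      · have hkN : k = N + (k - N) := by omega
        have hlt : k - N < k := by omega
        have ihm := ih (k - N) hlt
        calc f k = f (N + (k - N)) := by rw [← hkN]
          _ ≤ f N * f (k - N) := hsub _ _
          _ ≤ (1 / 2) * (C * t ^ (k - N)) :=
              mul_le_mul hfN ihm (hf0 _) (by norm_num)
          _ = (t ^ N * t ^ (k - N)) * C := by rw [htN]; ring
          _ = C * t ^ k := by rw [← pow_add, ← hkN]; ring
  exact fun k s s' => le_trans (hentry k s s') (key k)

/-- Absolute convergence of `W = ∑ (P-Ξ)^k (Pᵀ-Ξᵀ)^k` for an aperiodic unichain `P`,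
and the limit is a symmetric positive definite matrix with all eigenvalues at least 1
(expressed via the quadratic form dominating the identity). -/
theorem stmt1 {S : Type*} [Fintype S] [DecidableEq S]
    (P : Matrix S S ℝ)
    (hPnn : ∀ s s', 0 ≤ P s s')
    (hProw : ∀ s, ∑ s', P s s' = 1)
    (μ : S → ℝ) (hμnn : ∀ s, 0 ≤ μ s) (hμsum : ∑ s, μ s = 1)
    (hstat : Matrix.vecMul μ P = μ)
    (Ξ : Matrix S S ℝ) (hΞ : ∀ s s', Ξ s s' = μ s')
    (hconv : Filter.Tendsto (fun k => P ^ k) Filter.atTop (nhds Ξ)) :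
    (∀ s s', Summable fun k : ℕ => |((P - Ξ) ^ k * ((P - Ξ) ^ k)ᵀ) s s'|) ∧
    ∃ W : Matrix S S ℝ,
      (∀ s s', HasSum (fun k : ℕ => ((P - Ξ) ^ k * ((P - Ξ) ^ k)ᵀ) s s') (W s s')) ∧
      Wᵀ = W ∧
      (∀ u : S → ℝ, u ⬝ᵥ u ≤ u ⬝ᵥ W.mulVec u) ∧
      (∀ u : S → ℝ, u ≠ 0 → 0 < u ⬝ᵥ W.mulVec u) := by
  set Q : Matrix S S ℝ := P - Ξ with hQdef
  -- basic algebraic identities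
  have hPΞ : P * Ξ = Ξ := by
    ext s s'
    simp only [Matrix.mul_apply, hΞ]
    rw [← Finset.sum_mul, hProw, one_mul]
  have hΞP : Ξ * P = Ξ := by
    ext s s'
    simp only [Matrix.mul_apply, hΞ]
    have := congrFun hstat s'
    simpa [Matrix.vecMul, dotProduct] using this
  have hΞΞ : Ξ * Ξ = Ξ := by
    ext s s'
    simp only [Matrix.mul_apply, hΞ]
    rw [← Finset.sum_mul, hμsum, one_mul]
  have hPmΞ : ∀ m : ℕ, P ^ m * Ξ = Ξ := by
    intro m
    induction m with
    | zero => simp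
    | succ n ih => rw [pow_succ, mul_assoc, hPΞ, ih]
  have hQk : ∀ k : ℕ, Q ^ (k + 1) = P ^ (k + 1) - Ξ := by
    intro k
    induction k with
    | zero => simp [hQdef]
    | succ n ih =>
      rw [pow_succ, ih, hQdef, sub_mul, mul_sub, mul_sub, hPmΞ, hΞP, hΞΞ, ← pow_succ]
      abel
  -- entrywise convergence of Q^k to 0
  have hQtend : ∀ s s', Filter.Tendsto (fun k => (Q ^ k) s s') Filter.atTop (nhds 0) := by
    intro s s'
    have h1 : Filter.Tendsto (fun k => (P ^ k) s s') Filter.atTop (nhds (Ξ s s')) :=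
      (tendsto_pi_nhds.mp ((tendsto_pi_nhds.mp hconv) s)) s'
    have h2 : Filter.Tendsto (fun k => (P ^ k) s s' - Ξ s s') Filter.atTop (nhds 0) := by
      simpa using h1.sub (tendsto_const_nhds (x := Ξ s s'))
    refine h2.congr' ?_
    filter_upwards [Filter.eventually_ge_atTop 1] with k hk
    obtain ⟨m, rfl⟩ := Nat.exists_eq_add_of_le hk
    rw [add_comm 1 m, hQk m]
    simp
  obtain ⟨C, t, hC, ht0, ht1, hbound⟩ := aux_geom Q hQtend
  -- geometric bound on entries of Q^k (Q^k)ᵀ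
  have hgbound : ∀ (k : ℕ) (s s' : S),
      |(Q ^ k * (Q ^ k)ᵀ) s s'| ≤ ((Fintype.card S : ℝ) * C ^ 2) * (t ^ 2) ^ k := by
    intro k s s'
    rw [Matrix.mul_apply]
    calc |∑ x, (Q ^ k) s x * (Q ^ k)ᵀ x s'| ≤ ∑ x, |(Q ^ k) s x * (Q ^ k)ᵀ x s'| :=
        Finset.abs_sum_le_sum_abs _ _
      _ ≤ ∑ _x : S, (C * t ^ k) * (C * t ^ k) := by
          refine Finset.sum_le_sum fun x _ => ?_
          rw [abs_mul, Matrix.transpose_apply]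
          exact mul_le_mul (hbound k s x) (hbound k s' x) (abs_nonneg _)
            (by positivity)
      _ = ((Fintype.card S : ℝ) * C ^ 2) * (t ^ 2) ^ k := by
          rw [Finset.sum_const, Finset.card_univ, nsmul_eq_mul]
          ring
  have hgeo : Summable fun k : ℕ => ((Fintype.card S : ℝ) * C ^ 2) * (t ^ 2) ^ k :=
    (summable_geometric_of_lt_one (by positivity) (by nlinarith)).mul_left _
  have habs : ∀ s s', Summable fun k : ℕ => |(Q ^ k * (Q ^ k)ᵀ) s s'| := by
    intro s s'
    exact Summable.of_nonneg_of_le (fun k => abs_nonneg _) (fun k => hgbound k s s') hgeo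
  refine ⟨habs, ?_⟩
  set W : Matrix S S ℝ := Matrix.of fun s s' => ∑' k : ℕ, (Q ^ k * (Q ^ k)ᵀ) s s' with hWdef
  have hW : ∀ s s', HasSum (fun k : ℕ => (Q ^ k * (Q ^ k)ᵀ) s s') (W s s') :=
    fun s s' => ((habs s s').of_abs).hasSum
  -- symmetry of each term
  have hsym : ∀ (k : ℕ) (s s' : S), (Q ^ k * (Q ^ k)ᵀ) s' s = (Q ^ k * (Q ^ k)ᵀ) s s' := by
    intro k s s'
    simp only [Matrix.mul_apply, Matrix.transpose_apply]
    exact Finset.sum_congr rfl fun x _ => mul_comm _ _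
  -- quadratic form identity
  have hquad : ∀ u : S → ℝ,
      HasSum (fun k : ℕ => ∑ x, (Matrix.vecMul u (Q ^ k) x) ^ 2) (u ⬝ᵥ W.mulVec u) := by
    intro u
    have h1 : u ⬝ᵥ W.mulVec u = ∑ s, ∑ s', u s * (W s s' * u s') := by
      simp only [dotProduct, Matrix.mulVec, Finset.mul_sum]
    have h2 : HasSum (fun k : ℕ => ∑ s, ∑ s', u s * ((Q ^ k * (Q ^ k)ᵀ) s s' * u s'))
        (∑ s, ∑ s', u s * (W s s' * u s')) := by
      refine hasSum_sum fun s _ => hasSum_sum fun s' _ => ?_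
      exact ((hW s s').mul_right (u s')).mul_left (u s)
    rw [h1]
    refine h2.congr_fun fun k => ?_
    -- rearrange the triple sum
    have expand : ∀ s s', u s * ((Q ^ k * (Q ^ k)ᵀ) s s' * u s')
        = ∑ x, (u s * (Q ^ k) s x) * (u s' * (Q ^ k) s' x) := by
      intro s s'
      simp only [Matrix.mul_apply, Matrix.transpose_apply, Finset.mul_sum, Finset.sum_mul]
      exact Finset.sum_congr rfl fun x _ => by ring
    calc ∑ x, (Matrix.vecMul u (Q ^ k) x) ^ 2
        = ∑ x, (∑ s, u s * (Q ^ k) s x) * (∑ s', u s' * (Q ^ k) s' x) := by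
          refine Finset.sum_congr rfl fun x _ => ?_
          rw [sq]
          congr 1 <;> simp [Matrix.vecMul, dotProduct]
      _ = ∑ x, ∑ s, ∑ s', (u s * (Q ^ k) s x) * (u s' * (Q ^ k) s' x) := by
          refine Finset.sum_congr rfl fun x _ => ?_
          rw [Finset.sum_mul]
          exact Finset.sum_congr rfl fun s _ => by rw [Finset.mul_sum]
      _ = ∑ s, ∑ x, ∑ s', (u s * (Q ^ k) s x) * (u s' * (Q ^ k) s' x) := Finset.sum_comm
      _ = ∑ s, ∑ s', ∑ x, (u s * (Q ^ k) s x) * (u s' * (Q ^ k) s' x) := by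
          exact Finset.sum_congr rfl fun s _ => Finset.sum_comm
      _ = ∑ s, ∑ s', u s * ((Q ^ k * (Q ^ k)ᵀ) s s' * u s') := by
          exact Finset.sum_congr rfl fun s _ => Finset.sum_congr rfl fun s' _ =>
            (expand s s').symm
  have hterm0 : ∀ u : S → ℝ, (∑ x, (Matrix.vecMul u (Q ^ 0) x) ^ 2) = u ⬝ᵥ u := by
    intro u
    simp [dotProduct, sq]
  have hge : ∀ u : S → ℝ, u ⬝ᵥ u ≤ u ⬝ᵥ W.mulVec u := by
    intro u
    have := le_hasSum (hquad u) 0 (fun j _ => by positivity)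
    rwa [hterm0 u] at this
  refine ⟨W, hW, ?_, hge, ?_⟩
  · ext s s'
    rw [Matrix.transpose_apply]
    exact tsum_congr fun k => hsym k s s'
  · intro u hu
    have hpos : 0 < u ⬝ᵥ u := by
      obtain ⟨x, hx⟩ := Function.ne_iff.mp hu
      simp only [dotProduct]
      refine Finset.sum_pos' (fun i _ => mul_self_nonneg _) ⟨x, Finset.mem_univ x, ?_⟩
      exact mul_self_pos.mpr hx
    exact lt_of_lt_of_le hpos (hge u)
end

section
/- Let P be a row-stochastic aperiodic-unichain matrix on a finite set S with stationary distribution μ, let W = Σ_{k≥0}(P−Ξ)^k(Pᵀ−Ξᵀ)^k where Ξ has all rows μ, and let λ_W be the largest eigenvalue of W. Define the weighted norm ‖u‖_W = √(u W uᵀ) for row vectors u. Then for every probability distribution v on S: ‖vP − μ‖_W ≤ (1 − 1/(2λ_W)) · ‖v − μ‖_W. -/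
open Finset Matrix

/-- Pseudo-contraction of `P` toward the stationary distribution `μ` under the
`W`-weighted L2 norm, with contraction factor `1 - 1/(2 λ_W)`. -/
theorem stmt3 {S : Type*} [Fintype S] [DecidableEq S]
    (P Ξ W : Matrix S S ℝ) (μ : S → ℝ) (lamW : ℝ)
    (hPnn : ∀ s s', 0 ≤ P s s')
    (hProw : ∀ s, ∑ s', P s s' = 1)
    (hΞ : ∀ s s', Ξ s s' = μ s')
    (hμnn : ∀ s, 0 ≤ μ s) (hμsum : ∑ s, μ s = 1)
    (hstat : Matrix.vecMul μ P = μ)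
    (hconv : Filter.Tendsto (fun k => P ^ k) Filter.atTop (nhds Ξ))
    (hWsym : Wᵀ = W)
    (hWlow : ∀ u : S → ℝ, u ⬝ᵥ u ≤ u ⬝ᵥ W.mulVec u)
    (hWhigh : ∀ u : S → ℝ, u ⬝ᵥ W.mulVec u ≤ lamW * (u ⬝ᵥ u))
    (hLyap : (P - Ξ) * W * (Pᵀ - Ξᵀ) = W - 1)
    (v : S → ℝ) (hvnn : ∀ s, 0 ≤ v s) (hvsum : ∑ s, v s = 1) :
    Real.sqrt ((Matrix.vecMul v P - μ) ⬝ᵥ W.mulVec (Matrix.vecMul v P - μ))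
      ≤ (1 - 1 / (2 * lamW)) *
        Real.sqrt ((v - μ) ⬝ᵥ W.mulVec (v - μ)) := by
  -- S is nonempty
  have hSne : Nonempty S := by
    by_contra h
    rw [not_nonempty_iff] at h
    have : (∑ s, v s) = 0 := by simp
    rw [hvsum] at this; norm_num at this
  obtain ⟨s0⟩ := hSne
  -- lamW ≥ 1
  have hlam1 : (1 : ℝ) ≤ lamW := by
    have h1 := (hWlow (Pi.single s0 1)).trans (hWhigh (Pi.single s0 1))
    have hdot : (Pi.single s0 1 : S → ℝ) ⬝ᵥ Pi.single s0 1 = 1 := by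
      simp [dotProduct, Pi.single_apply]
    rw [hdot] at h1; linarith
  have hlampos : (0 : ℝ) < lamW := by linarith
  set u : S → ℝ := v - μ with hu
  set A : Matrix S S ℝ := P - Ξ with hA
  -- vP - μ = u A (as vecMul)
  have hkey : Matrix.vecMul v P - μ = Matrix.vecMul u A := by
    have hvΞ : Matrix.vecMul v Ξ = μ := by
      funext s'
      simp only [Matrix.vecMul, dotProduct, hΞ]
      rw [← Finset.sum_mul, hvsum, one_mul]
    have hμΞ : Matrix.vecMul μ Ξ = μ := by
      funext s'
      simp only [Matrix.vecMul, dotProduct, hΞ]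
      rw [← Finset.sum_mul, hμsum, one_mul]
    rw [hA, hu, Matrix.sub_vecMul, Matrix.vecMul_sub, Matrix.vecMul_sub,
      hvΞ, hμΞ, hstat]
    abel
  set w : S → ℝ := Matrix.vecMul u A with hw
  -- quadratic form identity
  have hquad : w ⬝ᵥ W.mulVec w = u ⬝ᵥ W.mulVec u - u ⬝ᵥ u := by
    have h1 : w ⬝ᵥ W.mulVec w = u ⬝ᵥ (A * W * Aᵀ).mulVec u := by
      symm
      rw [Matrix.mul_assoc, ← Matrix.mulVec_mulVec, ← Matrix.mulVec_mulVec,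
        Matrix.dotProduct_mulVec, Matrix.mulVec_transpose, hw]
    have h2 : A * W * Aᵀ = W - 1 := by
      rw [hA, Matrix.transpose_sub]; exact hLyap
    rw [h1, h2, Matrix.sub_mulVec, dotProduct_sub, Matrix.one_mulVec]
  set x : ℝ := u ⬝ᵥ W.mulVec u with hx
  have huu : 0 ≤ u ⬝ᵥ u := by
    simp only [dotProduct]
    exact Finset.sum_nonneg fun s _ => mul_self_nonneg _
  have hxnn : 0 ≤ x := le_trans huu (hWlow u)
  have hxlow : x / lamW ≤ u ⬝ᵥ u := by
    rw [div_le_iff₀ hlampos]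
    calc x ≤ lamW * (u ⬝ᵥ u) := hWhigh u
    _ = (u ⬝ᵥ u) * lamW := mul_comm _ _
  -- bound on the new quadratic form
  have hbound : w ⬝ᵥ W.mulVec w ≤ (1 - 1 / (2 * lamW))^2 * x := by
    rw [hquad]
    have h1 : x - u ⬝ᵥ u ≤ (1 - 1/lamW) * x := by
      have : (1 - 1/lamW) * x = x - x / lamW := by ring
      rw [this]; linarith
    refine h1.trans ?_
    apply mul_le_mul_of_nonneg_right _ hxnn
    have : (1 - 1 / (2 * lamW))^2 = 1 - 1/lamW + 1/(4 * lamW^2) := by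
      field_simp; ring
    rw [this]
    have : 0 < 1/(4 * lamW^2) := by positivity
    linarith
  have hwnn : 0 ≤ w ⬝ᵥ W.mulVec w := by
    refine le_trans ?_ (hWlow w)
    simp only [dotProduct]
    exact Finset.sum_nonneg fun s _ => mul_self_nonneg _
  have hfac : 0 ≤ 1 - 1 / (2 * lamW) := by
    have : 1 / (2 * lamW) ≤ 1/2 := by
      apply div_le_div_of_nonneg_left <;> linarith
    linarith
  rw [hkey]
  calc Real.sqrt (w ⬝ᵥ W.mulVec w)
      ≤ Real.sqrt ((1 - 1 / (2 * lamW))^2 * x) := Real.sqrt_le_sqrt hbound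
    _ = (1 - 1 / (2 * lamW)) * Real.sqrt x := by
        rw [Real.sqrt_mul (sq_nonneg _), Real.sqrt_sq hfac]
end

section
/- Let μ be a probability distribution on a finite set S, let c : S → [0,1], and set α = Σ_s μ(s)c(s). Let z : S → ℝ≥0 with total mass m = Σ_s z(s), and suppose (1/2)·‖z − m·μ‖₁ ≤ β(1 − m) where β = min(α, 1−α) and 0 ≤ m ≤ 1. Then |Σ_s z(s)c(s) − αm| ≤ β(1−m), and consequently α·m − (1−α)(1−m) ≤ Σ_s z(s)c(s) ≤ α (using β ≤ α and β ≤ 1−α). -/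
open Finset

/-- Budget-requirement deviation bound: under the slack condition,
`|∑ z c − αm| ≤ β(1−m)`, and consequently `αm − (1−α)(1−m) ≤ ∑ z c ≤ α`. -/
theorem stmt7 {S : Type*} [Fintype S]
    (μ : S → ℝ) (hμnn : ∀ s, 0 ≤ μ s) (hμsum : ∑ s, μ s = 1)
    (c : S → ℝ) (hc : ∀ s, c s ∈ Set.Icc (0 : ℝ) 1)
    (α : ℝ) (hα : α = ∑ s, μ s * c s) (hα0 : 0 < α) (hα1 : α < 1)
    (z : S → ℝ) (hznn : ∀ s, 0 ≤ z s)
    (m : ℝ) (hm : m = ∑ s, z s) (hm0 : 0 ≤ m) (hm1 : m ≤ 1)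
    (β : ℝ) (hβ : β = min α (1 - α))
    (hslack : (1 / 2) * (∑ s, |z s - m * μ s|) ≤ β * (1 - m)) :
    |(∑ s, z s * c s) - α * m| ≤ β * (1 - m)
    ∧ α * m - (1 - α) * (1 - m) ≤ ∑ s, z s * c s
    ∧ (∑ s, z s * c s) ≤ α := by
  set d : S → ℝ := fun s => z s - m * μ s with hd
  have hdsum : ∑ s, d s = 0 := by
    simp only [hd, Finset.sum_sub_distrib, ← Finset.mul_sum, hμsum, ← hm]
    ring
  have hdec : (∑ s, z s * c s) - α * m = ∑ s, d s * c s := by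
    simp only [hd, sub_mul, Finset.sum_sub_distrib]
    rw [hα, Finset.sum_mul]
    congr 1
    apply Finset.sum_congr rfl
    intro s _
    ring
  have key : ∀ (e : S → ℝ), (∑ s, e s = 0) → (∀ s, |e s| = |d s|) →
      ∑ s, e s * c s ≤ (1/2) * ∑ s, |d s| := by
    intro e hesum habs
    have h1 : ∑ s, e s * c s ≤ ∑ s, max (e s) 0 := by
      apply Finset.sum_le_sum
      intro s _
      rcases le_or_gt 0 (e s) with h | h
      · calc e s * c s ≤ e s * 1 := by
              exact mul_le_mul_of_nonneg_left (hc s).2 h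
          _ ≤ max (e s) 0 := by simp [h]
      · have : e s * c s ≤ 0 := mul_nonpos_of_nonpos_of_nonneg h.le (hc s).1
        exact this.trans (le_max_right _ _)
    have h2 : ∑ s, max (e s) 0 = (1/2) * ∑ s, |d s| := by
      have : ∀ s : S, max (e s) 0 = (|e s| + e s) / 2 := by
        intro s; rcases le_or_gt 0 (e s) with h | h
        · rw [abs_of_nonneg h, max_eq_left h]; ring
        · rw [abs_of_neg h]; rw [max_eq_right h.le]; ring
      rw [Finset.sum_congr rfl (fun s _ => this s)]
      rw [← Finset.sum_div, Finset.sum_add_distrib, hesum]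
      rw [Finset.sum_congr rfl (fun s _ => habs s)]
      ring
    linarith
  have hhalf : (1/2) * ∑ s, |d s| ≤ β * (1 - m) := hslack
  have hup : ∑ s, d s * c s ≤ β * (1 - m) :=
    le_trans (key d hdsum (fun _ => rfl)) hhalf
  have hdn : -(∑ s, d s * c s) ≤ β * (1 - m) := by
    have := key (fun s => -(d s)) (by simp [hdsum]) (fun s => abs_neg _)
    have heq : ∑ s, (fun s => -(d s)) s * c s = -(∑ s, d s * c s) := by
      simp [neg_mul, Finset.sum_neg_distrib]
    rw [heq] at this
    linarith
  have habsle : |(∑ s, z s * c s) - α * m| ≤ β * (1 - m) := by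
    rw [hdec, abs_le]
    constructor <;> linarith
  refine ⟨habsle, ?_, ?_⟩
  · have hβle : β ≤ 1 - α := by rw [hβ]; exact min_le_right _ _
    have h1m : 0 ≤ 1 - m := by linarith
    have := (abs_le.mp habsle).1
    nlinarith
  · have hβle : β ≤ α := by rw [hβ]; exact min_le_left _ _
    have h1m : 0 ≤ 1 - m := by linarith
    have := (abs_le.mp habsle).2
    nlinarith
end

section
/- Consider the linear program (LP): maximize Σ_{s,a} r(s,a) y(s,a) over y : S × {0,1} → ℝ≥0 subject to Σ_s y(s,1) = α, Σ_{s',a} y(s',a) P(s',a,s) = Σ_a y(s,a) for all s, and Σ_{s,a} y(s,a) = 1. For any N-armed restless bandit policy π that is stationary Markovian with well-defined long-run average state-action frequencies y^π(s,a) = lim_T (1/T) Σ_{t<T} E[(1/N) Σ_{i∈[N]} 1{S_t(i)=s, A_t(i)=a}] and that activates exactly αN arms at every time step, the vector y^π is feasible for (LP) and the long-run average reward of π equals Σ_{s,a} r(s,a) y^π(s,a); hence the optimal value of (LP) upper-bounds the optimal long-run average reward of the N-armed problem. -/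
/-!
Let `x_t(s, a)` be the expected fraction of arms in state `s` taking action `a` at time `t`, so
that `y^π` is the Cesàro limit of `x_t`. Each `x_t` satisfies the LP constraints up to a shift in
time: it is a probability vector, linearity of expectation turns the almost sure budget into
`∑ s, x_t(s, 1) = α`, and the transition law gives
`∑ s' a, x_t(s', a) P(s', a, s) = ∑ a, x_{t+1}(s, a)`. Cesàro limits are linear and do not see a
shift of a bounded sequence, so all constraints pass to `y^π`; the expected reward at time `t` is
`∑ r x_t` for the same reason. The LP objective is bounded by `∑ |r|` on the feasible set, so its
supremum dominates the value at `y^π`.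
-/

open MeasureTheory Finset Filter Topology

noncomputable def cesaroMean (f : ℕ → ℝ) (T : ℕ) : ℝ := (1 / (T : ℝ)) * ∑ t ∈ range T, f t

theorem cesaroMean_sum {ι : Type*} (s : Finset ι) (f : ι → ℕ → ℝ) (T : ℕ) :
    cesaroMean (fun t => ∑ i ∈ s, f i t) T = ∑ i ∈ s, cesaroMean (f i) T := by
  simp only [cesaroMean, Finset.mul_sum]
  exact Finset.sum_comm

theorem cesaroMean_const_mul (c : ℝ) (f : ℕ → ℝ) (T : ℕ) :
    cesaroMean (fun t => c * f t) T = c * cesaroMean f T := by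
  simp only [cesaroMean, ← Finset.mul_sum]
  ring

theorem Filter.Tendsto.cesaroMean_const_mul {f : ℕ → ℝ} {L : ℝ}
    (h : Tendsto (cesaroMean f) atTop (𝓝 L)) (c : ℝ) :
    Tendsto (cesaroMean fun t => c * f t) atTop (𝓝 (c * L)) :=
  (h.const_mul c).congr fun T => (_root_.cesaroMean_const_mul c f T).symm

theorem Filter.Tendsto.cesaroMean_mul_const {f : ℕ → ℝ} {L : ℝ}
    (h : Tendsto (cesaroMean f) atTop (𝓝 L)) (c : ℝ) :
    Tendsto (cesaroMean fun t => f t * c) atTop (𝓝 (L * c)) := by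
  simpa only [mul_comm _ c] using h.cesaroMean_const_mul c

theorem cesaroMean_nonneg {f : ℕ → ℝ} (hf : ∀ t, 0 ≤ f t) (T : ℕ) : 0 ≤ cesaroMean f T :=
  mul_nonneg (by positivity) (Finset.sum_nonneg fun t _ => hf t)

theorem tendsto_cesaroMean_sum {ι : Type*} (s : Finset ι) {f : ι → ℕ → ℝ} {L : ι → ℝ}
    (h : ∀ i ∈ s, Tendsto (cesaroMean (f i)) atTop (𝓝 (L i))) :
    Tendsto (cesaroMean fun t => ∑ i ∈ s, f i t) atTop (𝓝 (∑ i ∈ s, L i)) :=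
  (tendsto_finsetSum s h).congr fun T => (cesaroMean_sum s f T).symm

theorem eq_of_tendsto_cesaroMean_const {f : ℕ → ℝ} {c L : ℝ} (hf : ∀ t, f t = c)
    (h : Tendsto (cesaroMean f) atTop (𝓝 L)) : L = c := by
  refine tendsto_nhds_unique h (tendsto_const_nhds.congr' ?_)
  filter_upwards [eventually_ne_atTop 0] with T hT
  simp only [cesaroMean, hf, Finset.sum_const, Finset.card_range, nsmul_eq_mul]
  field_simp

/-- The Cesàro means of a bounded sequence and of its shift differ by `(f T - f 0) / T`. -/
theorem eq_of_tendsto_cesaroMean_shift {f : ℕ → ℝ} {C L L' : ℝ} (hf : ∀ t, |f t| ≤ C)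
    (h' : Tendsto (cesaroMean fun t => f (t + 1)) atTop (𝓝 L'))
    (h : Tendsto (cesaroMean f) atTop (𝓝 L)) : L' = L := by
  have hdiff : ∀ T, cesaroMean (fun t => f (t + 1)) T - cesaroMean f T = (f T - f 0) / T := by
    intro T
    rw [cesaroMean, cesaroMean, ← mul_sub, ← Finset.sum_sub_distrib, Finset.sum_range_sub]
    ring
  have hbound : ∀ T : ℕ, ‖(f T - f 0) / T‖ ≤ 2 * C / T := by
    intro T
    rw [Real.norm_eq_abs, abs_div, Nat.abs_cast]
    gcongr
    linarith [abs_sub (f T) (f 0), hf T, hf 0]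
  have hzero : Tendsto (fun T : ℕ => (f T - f 0) / T) atTop (𝓝 0) :=
    squeeze_zero_norm hbound (tendsto_const_div_atTop_nhds_zero_nat _)
  rw [← sub_eq_zero]
  exact tendsto_nhds_unique ((h'.sub h).congr hdiff) hzero

section FiniteValued

variable {Ω β : Type*} [MeasurableSpace Ω] {μ : Measure Ω} [IsFiniteMeasure μ]
  [Fintype β] [MeasurableSpace β] [MeasurableSingletonClass β]

theorem sum_measureReal_and_eq {Z : Ω → β} (hZ : Measurable Z) (p : Ω → Prop) :
    ∑ b, μ.real {ω | p ω ∧ Z ω = b} = μ.real {ω | p ω} := by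
  have := sum_measureReal_preimage_singleton (μ := μ.restrict {ω | p ω}) univ
    (fun b _ => hZ (measurableSet_singleton b))
  simp only [measureReal_restrict_apply (hZ (measurableSet_singleton _)), Set.inter_comm,
    coe_univ, Set.preimage_univ, measureReal_restrict_apply_univ] at this
  exact this

theorem sum_sum_measureReal_and_eq {γ : Type*} [Fintype γ] [MeasurableSpace γ]
    [MeasurableSingletonClass γ] {X : Ω → β} {Y : Ω → γ} (hX : Measurable X) (hY : Measurable Y)
    (p : Ω → Prop) :
    ∑ b, ∑ c, μ.real {ω | p ω ∧ X ω = b ∧ Y ω = c} = μ.real {ω | p ω} := by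
  simp_rw [← and_assoc, sum_measureReal_and_eq hY, sum_measureReal_and_eq hX]

theorem integral_comp_eq_sum {Z : Ω → β} (hZ : Measurable Z) (g : β → ℝ) :
    ∫ ω, g (Z ω) ∂μ = ∑ b, g b * μ.real (Z ⁻¹' {b}) := by
  rw [← integral_map hZ.aemeasurable (Integrable.of_finite).aestronglyMeasurable,
    integral_fintype (hf := Integrable.of_finite)]
  simp [map_measureReal_apply hZ (measurableSet_singleton _), mul_comm]

theorem integral_card_filter_eq_sum_measureReal {ι : Type*} [Fintype ι] (p : ι → Ω → Prop)
    [∀ i ω, Decidable (p i ω)] (hp : ∀ i, MeasurableSet {ω | p i ω}) :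
    ∫ ω, (#{i | p i ω} : ℝ) ∂μ = ∑ i, μ.real {ω | p i ω} := by
  have hcount : ∀ ω, (#{i | p i ω} : ℝ) = ∑ i, {ω | p i ω}.indicator 1 ω := fun ω => by
    simp only [Finset.natCast_card_filter, Set.indicator_apply, Set.mem_ofPred_eq, Pi.one_apply]
  simp_rw [hcount]
  rw [integral_finsetSum _ fun i _ => (integrable_const 1).indicator (hp i)]
  exact Finset.sum_congr rfl fun i _ => integral_indicator_one (hp i)

theorem integral_comp₂_eq_sum {γ : Type*} [Fintype γ] [MeasurableSpace γ]
    [MeasurableSingletonClass γ] {X : Ω → β} {Y : Ω → γ} (hX : Measurable X) (hY : Measurable Y)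
    (g : β → γ → ℝ) :
    ∫ ω, g (X ω) (Y ω) ∂μ = ∑ b, ∑ c, g b c * μ.real {ω | X ω = b ∧ Y ω = c} := by
  rw [integral_comp_eq_sum (hX.prodMk hY) (fun p => g p.1 p.2), Fintype.sum_prod_type]
  simp only [← Set.singleton_prod_singleton, Set.mk_preimage_prod]
  rfl

end FiniteValued

section RestlessBandit

variable {S A Ω : Type*} [MeasurableSpace Ω] {Pr : Measure Ω} {N : ℕ}
  {St : ℕ → Fin N → Ω → S} {At : ℕ → Fin N → Ω → A}

variable (Pr St At) in
/-- The paper's `x_t(s, a)`, whose Cesàro limit is `y^π`. -/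
noncomputable def stateActionFreq (t : ℕ) (s : S) (a : A) : ℝ :=
  (1 / (N : ℝ)) * ∑ i, Pr.real {ω | St t i ω = s ∧ At t i ω = a}

theorem stateActionFreq_nonneg (t : ℕ) (s : S) (a : A) : 0 ≤ stateActionFreq Pr St At t s a :=
  mul_nonneg (by positivity) (Finset.sum_nonneg fun _ _ => measureReal_nonneg)

theorem sum_sum_mul_stateActionFreq [Fintype S] [Fintype A] (u : S → A → ℝ) (t : ℕ) :
    ∑ s, ∑ a, u s a * stateActionFreq Pr St At t s a
      = (1 / (N : ℝ)) * ∑ i, ∑ s, ∑ a, u s a * Pr.real {ω | St t i ω = s ∧ At t i ω = a} := by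
  simp only [stateActionFreq, Finset.mul_sum]
  rw [Finset.sum_comm_cycle]
  exact Finset.sum_congr rfl fun _ _ => Finset.sum_congr rfl fun _ _ =>
    Finset.sum_congr rfl fun _ _ => by ring

variable [Fintype S] [MeasurableSpace S] [MeasurableSingletonClass S]
  [MeasurableSpace A] [MeasurableSingletonClass A]

theorem sum_sum_stateActionFreq [Fintype A] [IsProbabilityMeasure Pr] (hN : N ≠ 0)
    (hS : ∀ t i, Measurable (St t i)) (hA : ∀ t i, Measurable (At t i)) (t : ℕ) :
    ∑ s, ∑ a, stateActionFreq Pr St At t s a = 1 := by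
  have hperArm : ∀ i, ∑ s, ∑ a, Pr.real {ω | St t i ω = s ∧ At t i ω = a} = 1 := fun i => by
    simpa using sum_sum_measureReal_and_eq (μ := Pr) (hS t i) (hA t i) fun _ => True
  simpa [hperArm, hN] using sum_sum_mul_stateActionFreq (Pr := Pr) (St := St) (At := At)
    (fun _ _ => 1) t

theorem abs_sum_stateActionFreq_le_one [Fintype A] [IsProbabilityMeasure Pr] (hN : N ≠ 0)
    (hS : ∀ t i, Measurable (St t i)) (hA : ∀ t i, Measurable (At t i)) (t : ℕ) (s : S) :
    |∑ a, stateActionFreq Pr St At t s a| ≤ 1 := by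
  rw [abs_of_nonneg (Finset.sum_nonneg fun a _ => stateActionFreq_nonneg t s a),
    ← sum_sum_stateActionFreq (Pr := Pr) hN hS hA t]
  exact Finset.single_le_sum (fun s _ => Finset.sum_nonneg fun a _ => stateActionFreq_nonneg t s a)
    (Finset.mem_univ s)

theorem sum_stateActionFreq_eq_of_ae_card [DecidableEq A] [IsProbabilityMeasure Pr] (hN : N ≠ 0)
    (hS : ∀ t i, Measurable (St t i)) (hA : ∀ t i, Measurable (At t i)) {t : ℕ} (a : A) {α : ℝ}
    (hbudget : ∀ᵐ ω ∂Pr, (#{i | At t i ω = a} : ℝ) = α * N) :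
    ∑ s, stateActionFreq Pr St At t s a = α := by
  have hactive : ∑ i, Pr.real {ω | At t i ω = a} = α * N := by
    rw [← integral_card_filter_eq_sum_measureReal (μ := Pr) (fun i ω => At t i ω = a)
      fun i => hA t i (measurableSet_singleton a), integral_congr_ae hbudget]
    simp
  have hperArm : ∀ i,
      ∑ s, Pr.real {ω | St t i ω = s ∧ At t i ω = a} = Pr.real {ω | At t i ω = a} :=
    fun i => by simpa only [and_comm] using sum_measureReal_and_eq (μ := Pr) (hS t i) (At t i · = a)
  simp only [stateActionFreq, ← Finset.mul_sum]
  rw [Finset.sum_comm]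
  simp only [hperArm, hactive]
  field_simp

theorem sum_sum_stateActionFreq_mul_transition [Fintype A] [IsFiniteMeasure Pr]
    (hS : ∀ t i, Measurable (St t i)) (hA : ∀ t i, Measurable (At t i)) {P : S → A → S → ℝ}
    (hP : ∀ s a s', 0 ≤ P s a s') {t : ℕ}
    (hdyn : ∀ (i : Fin N) (s s' : S) (a : A),
      Pr {ω | St (t + 1) i ω = s' ∧ St t i ω = s ∧ At t i ω = a}
        = ENNReal.ofReal (P s a s') * Pr {ω | St t i ω = s ∧ At t i ω = a}) (s : S) :
    ∑ s', ∑ a, stateActionFreq Pr St At t s' a * P s' a s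
      = ∑ a, stateActionFreq Pr St At (t + 1) s a := by
  have hperArm : ∀ i, ∑ s', ∑ a, P s' a s * Pr.real {ω | St t i ω = s' ∧ At t i ω = a}
      = ∑ a, Pr.real {ω | St (t + 1) i ω = s ∧ At (t + 1) i ω = a} := fun i => by
    rw [sum_measureReal_and_eq (hA (t + 1) i),
      ← sum_sum_measureReal_and_eq (hS t i) (hA t i) (St (t + 1) i · = s)]
    simp only [measureReal_def, hdyn, ENNReal.toReal_mul, ENNReal.toReal_ofReal (hP _ _ _)]
  calc ∑ s', ∑ a, stateActionFreq Pr St At t s' a * P s' a s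
      = ∑ s', ∑ a, P s' a s * stateActionFreq Pr St At t s' a := by simp only [mul_comm]
    _ = 1 / (N : ℝ) * ∑ i, ∑ a, Pr.real {ω | St (t + 1) i ω = s ∧ At (t + 1) i ω = a} := by
      rw [sum_sum_mul_stateActionFreq]
      simp only [hperArm]
    _ = ∑ a, stateActionFreq Pr St At (t + 1) s a := by
      simp only [stateActionFreq, ← Finset.mul_sum]
      rw [Finset.sum_comm]

theorem average_integral_eq_sum_sum_mul_stateActionFreq [Fintype A] [IsFiniteMeasure Pr]
    (hS : ∀ t i, Measurable (St t i)) (hA : ∀ t i, Measurable (At t i)) (r : S → A → ℝ) (t : ℕ) :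
    (1 / (N : ℝ)) * ∑ i, ∫ ω, r (St t i ω) (At t i ω) ∂Pr
      = ∑ s, ∑ a, r s a * stateActionFreq Pr St At t s a := by
  simp only [integral_comp₂_eq_sum (hS t _) (hA t _), sum_sum_mul_stateActionFreq]

end RestlessBandit

theorem sum_sum_mul_le_sum_sum_abs {ι κ : Type*} [Fintype ι] [Fintype κ] (r : ι → κ → ℝ)
    {y : ι → κ → ℝ} (hy0 : ∀ i j, 0 ≤ y i j) (hy1 : ∑ i, ∑ j, y i j = 1) :
    ∑ i, ∑ j, r i j * y i j ≤ ∑ i, ∑ j, |r i j| := by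
  have hle : ∀ i j, y i j ≤ 1 := fun i j => hy1 ▸ (Finset.single_le_sum (fun j _ => hy0 i j)
    (Finset.mem_univ j)).trans (Finset.single_le_sum (fun i _ => Finset.sum_nonneg
      fun j _ => hy0 i j) (Finset.mem_univ i))
  gcongr with i _ j _
  calc r i j * y i j ≤ |r i j| * y i j := by gcongr; exacts [hy0 i j, le_abs_self _]
    _ ≤ |r i j| := mul_le_of_le_one_right (abs_nonneg _) (hle i j)

theorem stmt15_general {S : Type*} [Fintype S]
    [MeasurableSpace S] [MeasurableSingletonClass S]
    {Ω : Type*} [MeasurableSpace Ω] (Pr : Measure Ω) [IsProbabilityMeasure Pr]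
    (P : S → Fin 2 → S → ℝ)
    (hPnn : ∀ s a s', 0 ≤ P s a s')
    (r : S → Fin 2 → ℝ)
    (N : ℕ) (hN : 0 < N)
    (α : ℝ)
    (St : ℕ → Fin N → Ω → S) (At : ℕ → Fin N → Ω → Fin 2)
    (hSmeas : ∀ t i, Measurable (St t i))
    (hAmeas : ∀ t i, Measurable (At t i))
    (hbudget : ∀ t, ∀ᵐ ω ∂Pr,
      ((univ.filter fun i : Fin N => At t i ω = 1).card : ℝ) = α * N)
    (hdyn : ∀ t (i : Fin N) (s s' : S) (a : Fin 2),
      Pr {ω | St (t + 1) i ω = s' ∧ St t i ω = s ∧ At t i ω = a}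
        = ENNReal.ofReal (P s a s') * Pr {ω | St t i ω = s ∧ At t i ω = a})
    (y : S → Fin 2 → ℝ)
    (hy : ∀ s a, Filter.Tendsto
      (fun T : ℕ => (1 / (T : ℝ)) * ∑ t ∈ range T,
        (1 / (N : ℝ)) * ∑ i : Fin N, (Pr {ω | St t i ω = s ∧ At t i ω = a}).toReal)
      Filter.atTop (nhds (y s a))) :
    (∀ s a, 0 ≤ y s a)
    ∧ (∑ s, y s 1 = α)
    ∧ (∀ s : S, ∑ s' : S, ∑ a : Fin 2, y s' a * P s' a s = ∑ a : Fin 2, y s a)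
    ∧ (∑ s, ∑ a, y s a = 1)
    ∧ Filter.Tendsto
        (fun T : ℕ => (1 / (T : ℝ)) * ∑ t ∈ range T,
          (1 / (N : ℝ)) * ∑ i : Fin N, ∫ ω, r (St t i ω) (At t i ω) ∂Pr)
        Filter.atTop (nhds (∑ s, ∑ a, r s a * y s a))
    ∧ (∑ s, ∑ a, r s a * y s a) ≤
        sSup {v : ℝ | ∃ y' : S → Fin 2 → ℝ,
          (∀ s a, 0 ≤ y' s a) ∧ (∑ s, y' s 1 = α) ∧
          (∀ s : S, ∑ s' : S, ∑ a : Fin 2, y' s' a * P s' a s = ∑ a : Fin 2, y' s a) ∧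
          (∑ s, ∑ a, y' s a = 1) ∧ v = ∑ s, ∑ a, r s a * y' s a} := by
  have hx : ∀ s a, Tendsto (cesaroMean fun t => stateActionFreq Pr St At t s a) atTop
      (𝓝 (y s a)) := hy
  have hN0 : N ≠ 0 := hN.ne'
  have hy0 : ∀ s a, 0 ≤ y s a := fun s a =>
    ge_of_tendsto' (hx s a) (cesaroMean_nonneg fun t => stateActionFreq_nonneg t s a)
  have hbudget' : ∑ s, y s 1 = α :=
    eq_of_tendsto_cesaroMean_const
      (fun t => sum_stateActionFreq_eq_of_ae_card hN0 hSmeas hAmeas 1 (hbudget t))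
      (tendsto_cesaroMean_sum univ fun s _ => hx s 1)
  have hflow : ∀ s, ∑ s', ∑ a, y s' a * P s' a s = ∑ a, y s a := fun s => by
    have h := tendsto_cesaroMean_sum univ fun s' _ =>
      tendsto_cesaroMean_sum univ fun a _ => (hx s' a).cesaroMean_mul_const (P s' a s)
    simp only [sum_sum_stateActionFreq_mul_transition hSmeas hAmeas hPnn (hdyn _)] at h
    exact eq_of_tendsto_cesaroMean_shift (abs_sum_stateActionFreq_le_one hN0 hSmeas hAmeas · s) h
      (tendsto_cesaroMean_sum univ fun a _ => hx s a)
  have htotal : ∑ s, ∑ a, y s a = 1 :=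
    eq_of_tendsto_cesaroMean_const (sum_sum_stateActionFreq hN0 hSmeas hAmeas)
      (tendsto_cesaroMean_sum univ fun s _ => tendsto_cesaroMean_sum univ fun a _ => hx s a)
  have hreward := tendsto_cesaroMean_sum univ fun s _ =>
    tendsto_cesaroMean_sum univ fun a _ => (hx s a).cesaroMean_const_mul (r s a)
  simp only [← average_integral_eq_sum_sum_mul_stateActionFreq hSmeas hAmeas] at hreward
  refine ⟨hy0, hbudget', hflow, htotal, hreward, le_csSup ⟨∑ s, ∑ a, |r s a|, ?_⟩
    ⟨y, hy0, hbudget', hflow, htotal, rfl⟩⟩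
  rintro v ⟨y', hy'0, -, -, hy'1, rfl⟩
  exact sum_sum_mul_le_sum_sum_abs r hy'0 hy'1

/-- LP relaxation upper bound for the `N`-armed restless bandit: for a policy with
well-defined long-run average state-action frequencies `y`, satisfying the exact
budget constraint `∑ᵢ Aₜ(i) = αN` and the single-armed transition dynamics, the
frequency vector `y` is feasible for the LP relaxation, the long-run average reward
equals `∑ r y`, and hence is at most the optimal LP value. -/
theorem stmt15 {S : Type*} [Fintype S] [DecidableEq S]
    [MeasurableSpace S] [MeasurableSingletonClass S]
    {Ω : Type*} [MeasurableSpace Ω] (Pr : Measure Ω) [IsProbabilityMeasure Pr]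
    (P : S → Fin 2 → S → ℝ)
    (hPnn : ∀ s a s', 0 ≤ P s a s')
    (hProw : ∀ s a, ∑ s', P s a s' = 1)
    (r : S → Fin 2 → ℝ)
    (N : ℕ) (hN : 0 < N)
    (α : ℝ) (hα0 : 0 < α) (hα1 : α < 1)
    (hαN : ∃ M : ℕ, (M : ℝ) = α * N)
    (St : ℕ → Fin N → Ω → S) (At : ℕ → Fin N → Ω → Fin 2)
    (hSmeas : ∀ t i, Measurable (St t i))
    (hAmeas : ∀ t i, Measurable (At t i))
    (hbudget : ∀ t, ∀ᵐ ω ∂Pr,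
      ((univ.filter fun i : Fin N => At t i ω = 1).card : ℝ) = α * N)
    (hdyn : ∀ t (i : Fin N) (s s' : S) (a : Fin 2),
      Pr {ω | St (t + 1) i ω = s' ∧ St t i ω = s ∧ At t i ω = a}
        = ENNReal.ofReal (P s a s') * Pr {ω | St t i ω = s ∧ At t i ω = a})
    (y : S → Fin 2 → ℝ)
    (hy : ∀ s a, Filter.Tendsto
      (fun T : ℕ => (1 / (T : ℝ)) * ∑ t ∈ range T,
        (1 / (N : ℝ)) * ∑ i : Fin N, (Pr {ω | St t i ω = s ∧ At t i ω = a}).toReal)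
      Filter.atTop (nhds (y s a))) :
    (∀ s a, 0 ≤ y s a)
    ∧ (∑ s, y s 1 = α)
    ∧ (∀ s : S, ∑ s' : S, ∑ a : Fin 2, y s' a * P s' a s = ∑ a : Fin 2, y s a)
    ∧ (∑ s, ∑ a, y s a = 1)
    ∧ Filter.Tendsto
        (fun T : ℕ => (1 / (T : ℝ)) * ∑ t ∈ range T,
          (1 / (N : ℝ)) * ∑ i : Fin N, ∫ ω, r (St t i ω) (At t i ω) ∂Pr)
        Filter.atTop (nhds (∑ s, ∑ a, r s a * y s a))
    ∧ (∑ s, ∑ a, r s a * y s a) ≤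
        sSup {v : ℝ | ∃ y' : S → Fin 2 → ℝ,
          (∀ s a, 0 ≤ y' s a) ∧ (∑ s, y' s 1 = α) ∧
          (∀ s : S, ∑ s' : S, ∑ a : Fin 2, y' s' a * P s' a s = ∑ a : Fin 2, y' s a) ∧
          (∑ s, ∑ a, y' s a = 1) ∧ v = ∑ s, ∑ a, r s a * y' s a} :=
  stmt15_general Pr P hPnn r N hN α St At hSmeas hAmeas hbudget hdyn y hy
end

section
/- Let P be a row-stochastic aperiodic-unichain matrix with stationary distribution μ, let W = Σ_{k≥0}(P−Ξ)^k(Pᵀ−Ξᵀ)^k with largest eigenvalue λ_W, and let x ∈ ℝ^S be nonnegative with mass m, written x = (1/N)Σ_{i=1}^{Nm} e_{s_i}. Let X' = (1/N)Σ_{i=1}^{Nm} e_{σ_i} where σ_i ~ P(s_i,·) independently. Then E[‖X' − m μ‖_W] ≤ (1 − 1/(2λ_W))·‖x − m μ‖_W + 2√λ_W / √N. -/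
open MeasureTheory ProbabilityTheory Finset Matrix



private lemma quad_symm_dot {S : Type*} [Fintype S] (W : Matrix S S ℝ) (hWsym : Wᵀ = W)
    (a b : S → ℝ) : b ⬝ᵥ W.mulVec a = a ⬝ᵥ W.mulVec b := by
  rw [dotProduct_mulVec b W a]
  conv_lhs => rw [← hWsym]
  rw [vecMul_transpose, dotProduct_comm]

private lemma quad_triangle {S : Type*} [Fintype S] (W : Matrix S S ℝ) (hWsym : Wᵀ = W)
    (hpsd : ∀ u : S → ℝ, 0 ≤ u ⬝ᵥ W.mulVec u) (a b : S → ℝ) :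
    Real.sqrt ((a + b) ⬝ᵥ W.mulVec (a + b)) ≤
      Real.sqrt (a ⬝ᵥ W.mulVec a) + Real.sqrt (b ⬝ᵥ W.mulVec b) := by
  have hA : 0 ≤ a ⬝ᵥ W.mulVec a := hpsd a
  have hB : 0 ≤ b ⬝ᵥ W.mulVec b := hpsd b
  have hexp : ∀ t : ℝ, (a + t • b) ⬝ᵥ W.mulVec (a + t • b)
      = (b ⬝ᵥ W.mulVec b) * (t * t) + (2 * (a ⬝ᵥ W.mulVec b)) * t + a ⬝ᵥ W.mulVec a := by
    intro t
    rw [mulVec_add, mulVec_smul, dotProduct_add, add_dotProduct, add_dotProduct,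
      dotProduct_smul, smul_dotProduct, smul_dotProduct, dotProduct_smul,
      quad_symm_dot W hWsym b a]
    simp only [smul_eq_mul]
    ring
  have hdisc := discrim_le_zero (a := b ⬝ᵥ W.mulVec b) (b := 2 * (a ⬝ᵥ W.mulVec b))
    (c := a ⬝ᵥ W.mulVec a) (fun t => by rw [← hexp t]; exact hpsd _)
  rw [discrim] at hdisc
  have hCS : a ⬝ᵥ W.mulVec b ≤ Real.sqrt (a ⬝ᵥ W.mulVec a) * Real.sqrt (b ⬝ᵥ W.mulVec b) := by
    have h1 : (a ⬝ᵥ W.mulVec b) ^ 2 ≤ (a ⬝ᵥ W.mulVec a) * (b ⬝ᵥ W.mulVec b) := by nlinarith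
    calc a ⬝ᵥ W.mulVec b ≤ |a ⬝ᵥ W.mulVec b| := le_abs_self _
      _ = Real.sqrt ((a ⬝ᵥ W.mulVec b) ^ 2) := (Real.sqrt_sq_eq_abs _).symm
      _ ≤ Real.sqrt ((a ⬝ᵥ W.mulVec a) * (b ⬝ᵥ W.mulVec b)) := Real.sqrt_le_sqrt h1
      _ = _ := Real.sqrt_mul hA _
  have hexp1 : (a + b) ⬝ᵥ W.mulVec (a + b)
      = a ⬝ᵥ W.mulVec a + 2 * (a ⬝ᵥ W.mulVec b) + b ⬝ᵥ W.mulVec b := by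
    rw [show a + b = a + (1:ℝ) • b by simp, hexp 1]; ring
  calc Real.sqrt ((a + b) ⬝ᵥ W.mulVec (a + b))
      ≤ Real.sqrt ((Real.sqrt (a ⬝ᵥ W.mulVec a) + Real.sqrt (b ⬝ᵥ W.mulVec b)) ^ 2) := by
        apply Real.sqrt_le_sqrt
        rw [hexp1]
        nlinarith [Real.sq_sqrt hA, Real.sq_sqrt hB]
    _ = _ := Real.sqrt_sq (by positivity)



private lemma quad_conj {S : Type*} [Fintype S] (M W : Matrix S S ℝ) (v : S → ℝ) :
    (v ᵥ* M) ⬝ᵥ W.mulVec (v ᵥ* M) = v ⬝ᵥ (M * W * Mᵀ).mulVec v := by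
  rw [← mulVec_transpose, mulVec_mulVec, dotProduct_comm, dotProduct_mulVec,
    vecMul_transpose, mulVec_mulVec, ← mul_assoc, dotProduct_comm]

private lemma partA {S : Type*} [Fintype S] [DecidableEq S]
    (P Ξ W : Matrix S S ℝ) (μ : S → ℝ) (lamW : ℝ)
    (hΞ : ∀ s s', Ξ s s' = μ s')
    (hstat : Matrix.vecMul μ P = μ)
    (hWlow : ∀ u : S → ℝ, u ⬝ᵥ u ≤ u ⬝ᵥ W.mulVec u)
    (hWhigh : ∀ u : S → ℝ, u ⬝ᵥ W.mulVec u ≤ lamW * (u ⬝ᵥ u))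
    (hLyap : (P - Ξ) * W * (Pᵀ - Ξᵀ) = W - 1)
    (hlam1 : 1 ≤ lamW)
    (x : S → ℝ) (c : ℝ) (hsum : ∑ st, x st = c) (hμsum : ∑ st, μ st = 1) :
    Real.sqrt ((x ᵥ* P - c • μ) ⬝ᵥ W.mulVec (x ᵥ* P - c • μ)) ≤
      (1 - 1/(2*lamW)) * Real.sqrt ((x - c • μ) ⬝ᵥ W.mulVec (x - c • μ)) := by
  have hlam0 : 0 < lamW := lt_of_lt_of_le one_pos hlam1
  set v : S → ℝ := x - c • μ with hv
  have hvsum : ∑ st, v st = 0 := by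
    simp only [hv, Pi.sub_apply, Pi.smul_apply, smul_eq_mul]
    rw [Finset.sum_sub_distrib, ← Finset.mul_sum, hμsum, hsum, mul_one, sub_self]
  have hstep1 : x ᵥ* P - c • μ = v ᵥ* (P - Ξ) := by
    funext st
    have hμP : ∑ s', μ s' * P s' st = μ st := by
      have := congrFun hstat st
      simpa [vecMul, dotProduct] using this
    have hv0 : ∑ s', (x s' - c * μ s') = 0 := by simpa [hv] using hvsum
    simp only [Pi.sub_apply, Pi.smul_apply, smul_eq_mul, vecMul, dotProduct,
      Matrix.sub_apply, hΞ, hv]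
    rw [Finset.sum_congr rfl (fun s' (_ : s' ∈ univ) =>
      show (x s' - c * μ s') * (P s' st - μ st)
        = x s' * P s' st - c * (μ s' * P s' st) - (x s' - c * μ s') * μ st from by ring)]
    rw [Finset.sum_sub_distrib, Finset.sum_sub_distrib, ← Finset.mul_sum, ← Finset.sum_mul,
      hμP, hv0, zero_mul, sub_zero]
  rw [hstep1]
  have hquad : (v ᵥ* (P - Ξ)) ⬝ᵥ W.mulVec (v ᵥ* (P - Ξ))
      = v ⬝ᵥ W.mulVec v - v ⬝ᵥ v := by
    rw [quad_conj, Matrix.transpose_sub, hLyap, sub_mulVec, dotProduct_sub, one_mulVec]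
  have hvv : v ⬝ᵥ W.mulVec v ≤ lamW * (v ⬝ᵥ v) := hWhigh v
  have hub : (v ᵥ* (P - Ξ)) ⬝ᵥ W.mulVec (v ᵥ* (P - Ξ)) ≤ (1 - 1/lamW) * (v ⬝ᵥ W.mulVec v) := by
    rw [hquad]
    have h2 : v ⬝ᵥ W.mulVec v / lamW ≤ v ⬝ᵥ v := (div_le_iff₀ hlam0).mpr (by linarith [hvv])
    have : (1 - 1/lamW) * (v ⬝ᵥ W.mulVec v) = v ⬝ᵥ W.mulVec v - v ⬝ᵥ W.mulVec v / lamW := by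
      field_simp
    linarith
  have hcoef0 : (0:ℝ) ≤ 1 - 1/lamW := by
    rw [sub_nonneg, div_le_one hlam0]; linarith
  have hc1 : (0:ℝ) ≤ 1 - 1/(2*lamW) := by
    rw [sub_nonneg, div_le_one (by linarith)]; linarith
  have hc : Real.sqrt (1 - 1/lamW) ≤ 1 - 1/(2*lamW) := by
    rw [← Real.sqrt_sq hc1]
    apply Real.sqrt_le_sqrt
    have e : (1 - 1/(2*lamW))^2 = 1 - 1/lamW + 1/(4*lamW^2) := by field_simp; ring
    rw [e]
    have : (0:ℝ) ≤ 1/(4*lamW^2) := by positivity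
    linarith
  calc Real.sqrt ((v ᵥ* (P - Ξ)) ⬝ᵥ W.mulVec (v ᵥ* (P - Ξ)))
      ≤ Real.sqrt ((1 - 1/lamW) * (v ⬝ᵥ W.mulVec v)) := Real.sqrt_le_sqrt hub
    _ = Real.sqrt (1 - 1/lamW) * Real.sqrt (v ⬝ᵥ W.mulVec v) := Real.sqrt_mul hcoef0 _
    _ ≤ (1 - 1/(2*lamW)) * Real.sqrt (v ⬝ᵥ W.mulVec v) :=
        mul_le_mul_of_nonneg_right hc (Real.sqrt_nonneg _)

private lemma partB {S : Type*} [Fintype S] {Ω : Type*} [MeasurableSpace Ω]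
    (Pr : Measure Ω) [IsProbabilityMeasure Pr]
    (W : Matrix S S ℝ) (lamW : ℝ)
    (hWlow : ∀ u : S → ℝ, u ⬝ᵥ u ≤ u ⬝ᵥ W.mulVec u)
    (hWhigh : ∀ u : S → ℝ, u ⬝ᵥ W.mulVec u ≤ lamW * (u ⬝ᵥ u))
    (hlam1 : 1 ≤ lamW)
    (N n : ℕ) (hN : 0 < N) (hn : n ≤ N)
    (Y : Ω → S → ℝ)
    (hintQ : Integrable (fun ω => Y ω ⬝ᵥ W.mulVec (Y ω)) Pr)
    (hintS : Integrable (fun ω => Real.sqrt (Y ω ⬝ᵥ W.mulVec (Y ω))) Pr)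
    (hintsum : Integrable (fun ω => ∑ st, (Y ω st)^2) Pr)
    (hintst : ∀ st, Integrable (fun ω => (Y ω st)^2) Pr)
    (hvar : ∑ st, ∫ ω, (Y ω st)^2 ∂Pr ≤ (n:ℝ)/(N:ℝ)^2) :
    ∫ ω, Real.sqrt (Y ω ⬝ᵥ W.mulVec (Y ω)) ∂Pr ≤ Real.sqrt lamW / Real.sqrt N := by
  have hlam0 : 0 < lamW := lt_of_lt_of_le one_pos hlam1
  have hNpos : (0:ℝ) < N := by exact_mod_cast hN
  have hQ0 : ∀ ω, 0 ≤ Y ω ⬝ᵥ W.mulVec (Y ω) := fun ω =>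
    le_trans (Finset.sum_nonneg (fun i _ => mul_self_nonneg _)) (hWlow (Y ω))
  -- integral of Q is at most lamW / N
  have hQbound : ∫ ω, Y ω ⬝ᵥ W.mulVec (Y ω) ∂Pr ≤ lamW / N := by
    have hpt : ∀ ω, Y ω ⬝ᵥ W.mulVec (Y ω) ≤ lamW * ∑ st, (Y ω st)^2 := by
      intro ω
      have := hWhigh (Y ω)
      have hd : Y ω ⬝ᵥ Y ω = ∑ st, (Y ω st)^2 := by
        simp [dotProduct, sq]
      rwa [hd] at this
    calc ∫ ω, Y ω ⬝ᵥ W.mulVec (Y ω) ∂Pr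
        ≤ ∫ ω, lamW * ∑ st, (Y ω st)^2 ∂Pr :=
          integral_mono hintQ (hintsum.const_mul lamW) hpt
      _ = lamW * ∑ st, ∫ ω, (Y ω st)^2 ∂Pr := by
          rw [integral_const_mul]
          congr 1
          exact integral_finset_sum _ (fun st _ => hintst st)
      _ ≤ lamW * ((n:ℝ)/(N:ℝ)^2) := by
          exact mul_le_mul_of_nonneg_left hvar hlam0.le
      _ ≤ lamW / N := by
          have hncast : (n:ℝ) ≤ N := Nat.cast_le.mpr hn
          rw [div_eq_mul_one_div lamW]
          apply mul_le_mul_of_nonneg_left _ hlam0.le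
          rw [div_le_div_iff₀ (by positivity) hNpos]
          nlinarith
  -- Jensen via nonnegativity of the variance
  set I := ∫ ω, Real.sqrt (Y ω ⬝ᵥ W.mulVec (Y ω)) ∂Pr with hI
  have hI0 : 0 ≤ I := integral_nonneg (fun ω => Real.sqrt_nonneg _)
  have hjensen : I^2 ≤ ∫ ω, Y ω ⬝ᵥ W.mulVec (Y ω) ∂Pr := by
    have h0 : 0 ≤ ∫ ω, (Real.sqrt (Y ω ⬝ᵥ W.mulVec (Y ω)) - I)^2 ∂Pr :=
      integral_nonneg (fun ω => sq_nonneg _)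
    have hexp : ∫ ω, (Real.sqrt (Y ω ⬝ᵥ W.mulVec (Y ω)) - I)^2 ∂Pr
        = ∫ ω, Y ω ⬝ᵥ W.mulVec (Y ω) ∂Pr - I^2 := by
      have hpt : ∀ ω, (Real.sqrt (Y ω ⬝ᵥ W.mulVec (Y ω)) - I)^2
          = (Y ω ⬝ᵥ W.mulVec (Y ω) - (2*I) * Real.sqrt (Y ω ⬝ᵥ W.mulVec (Y ω))) + I^2 := by
        intro ω
        rw [sub_sq, Real.sq_sqrt (hQ0 ω)]
        ring
      simp_rw [hpt]
      have h1 : Integrable (fun ω => Y ω ⬝ᵥ W.mulVec (Y ω)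
          - (2*I) * Real.sqrt (Y ω ⬝ᵥ W.mulVec (Y ω))) Pr :=
        hintQ.sub (hintS.const_mul (2*I))
      have h2 : Integrable (fun ω => (2*I) * Real.sqrt (Y ω ⬝ᵥ W.mulVec (Y ω))) Pr :=
        hintS.const_mul (2*I)
      rw [integral_add h1 (integrable_const _), integral_sub hintQ h2, integral_const_mul,
        integral_const]
      simp [← hI]
      ring
    linarith
  have : I ≤ Real.sqrt (lamW / N) := by
    rw [Real.le_sqrt hI0 (by positivity)]
    exact hjensen.trans hQbound
  rwa [Real.sqrt_div hlam0.le] at this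

private lemma integral_sq_sum {Ω : Type*} [MeasurableSpace Ω] (Pr : Measure Ω)
    {n : ℕ} (Z : Fin n → Ω → ℝ)
    (hint : ∀ i j : Fin n, Integrable (fun ω => Z i ω * Z j ω) Pr)
    (hzero : ∀ i j : Fin n, i ≠ j → ∫ ω, Z i ω * Z j ω ∂Pr = 0) :
    ∫ ω, (∑ i, Z i ω)^2 ∂Pr = ∑ i, ∫ ω, Z i ω * Z i ω ∂Pr := by
  have h1 : ∀ ω, (∑ i, Z i ω)^2 = ∑ i, ∑ j, Z i ω * Z j ω := by
    intro ω; rw [sq, Finset.sum_mul_sum]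
  calc ∫ ω, (∑ i, Z i ω)^2 ∂Pr = ∫ ω, ∑ i, ∑ j, Z i ω * Z j ω ∂Pr := by simp_rw [h1]
    _ = ∑ i, ∫ ω, ∑ j, Z i ω * Z j ω ∂Pr :=
        integral_finset_sum _ (fun i _ => integrable_finset_sum _ (fun j _ => hint i j))
    _ = ∑ i, ∑ j, ∫ ω, Z i ω * Z j ω ∂Pr :=
        Finset.sum_congr rfl (fun i _ => integral_finset_sum _ (fun j _ => hint i j))
    _ = ∑ i, ∫ ω, Z i ω * Z i ω ∂Pr := by
        refine Finset.sum_congr rfl (fun i _ => ?_)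
        exact Finset.sum_eq_single i (fun j _ hj => hzero i j (fun h => hj h.symm))
          (by simp)

-- card of fiber as a sum of indicators, real valued
private lemma card_fiber_eq {S : Type*} [Fintype S] [DecidableEq S] {n : ℕ}
    (t : Fin n → S) (st : S) :
    (((univ : Finset (Fin n)).filter fun i => t i = st).card : ℝ)
      = ∑ i : Fin n, (if t i = st then (1:ℝ) else 0) := by
  rw [Finset.card_filter]
  push_cast
  rfl

private lemma sum_fiberwise_card {S : Type*} [Fintype S] [DecidableEq S] {n : ℕ}
    (s : Fin n → S) (f : S → ℝ) :
    ∑ st : S, (((univ : Finset (Fin n)).filter fun i => s i = st).card : ℝ) * f st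
      = ∑ i : Fin n, f (s i) := by
  have : ∀ st, (((univ : Finset (Fin n)).filter fun i => s i = st).card : ℝ) * f st
      = ∑ i : Fin n, (if s i = st then f st else 0) := by
    intro st
    rw [card_fiber_eq, Finset.sum_mul]
    congr 1; funext i
    by_cases h : s i = st <;> simp [h]
  simp_rw [this]
  rw [Finset.sum_comm]
  refine Finset.sum_congr rfl (fun i _ => ?_)
  simp


/-- One-step drift of the `W`-weighted subset Lyapunov function: if `n = Nm` arms in
fixed states transition independently according to the aperiodic-unichain matrix `P`,
then `E[‖X' − mμ‖_W] ≤ (1 − 1/(2λ_W)) ‖x − mμ‖_W + 2√λ_W / √N`. -/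
theorem stmt17 {S : Type*} [Fintype S] [DecidableEq S]
    [MeasurableSpace S] [MeasurableSingletonClass S]
    {Ω : Type*} [MeasurableSpace Ω] (Pr : Measure Ω) [IsProbabilityMeasure Pr]
    (P Ξ W : Matrix S S ℝ) (μ : S → ℝ) (lamW : ℝ)
    (hPnn : ∀ s s', 0 ≤ P s s')
    (hProw : ∀ s, ∑ s', P s s' = 1)
    (hΞ : ∀ s s', Ξ s s' = μ s')
    (hμnn : ∀ s, 0 ≤ μ s) (hμsum : ∑ s, μ s = 1)
    (hstat : Matrix.vecMul μ P = μ)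
    (hconv : Filter.Tendsto (fun k => P ^ k) Filter.atTop (nhds Ξ))
    (hWsym : Wᵀ = W)
    (hWlow : ∀ u : S → ℝ, u ⬝ᵥ u ≤ u ⬝ᵥ W.mulVec u)
    (hWhigh : ∀ u : S → ℝ, u ⬝ᵥ W.mulVec u ≤ lamW * (u ⬝ᵥ u))
    (hLyap : (P - Ξ) * W * (Pᵀ - Ξᵀ) = W - 1)
    (N n : ℕ) (hN : 0 < N) (hn : n ≤ N)
    (s : Fin n → S)
    (σ : Fin n → Ω → S)
    (hmeas : ∀ i, Measurable (σ i))
    (hindep : iIndepFun σ Pr)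
    (hlaw : ∀ i s', (Pr {ω | σ i ω = s'}).toReal = P (s i) s') :
    ∫ ω, Real.sqrt
        ((fun st => (1 / (N : ℝ)) * ((univ.filter fun i : Fin n => σ i ω = st).card : ℝ)
            - ((n : ℝ) / N) * μ st) ⬝ᵥ
          W.mulVec (fun st =>
            (1 / (N : ℝ)) * ((univ.filter fun i : Fin n => σ i ω = st).card : ℝ)
              - ((n : ℝ) / N) * μ st)) ∂Pr
      ≤ (1 - 1 / (2 * lamW)) * Real.sqrt
          ((fun st => (1 / (N : ℝ)) * ((univ.filter fun i : Fin n => s i = st).card : ℝ)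
              - ((n : ℝ) / N) * μ st) ⬝ᵥ
            W.mulVec (fun st =>
              (1 / (N : ℝ)) * ((univ.filter fun i : Fin n => s i = st).card : ℝ)
                - ((n : ℝ) / N) * μ st))
        + 2 * Real.sqrt lamW / Real.sqrt N := by
  classical
  rcases isEmpty_or_nonempty S with hSe | hSne
  · have h0 : ∀ u w : S → ℝ, u ⬝ᵥ w = 0 := by
      intro u w; simp [dotProduct]
    simp only [h0, Real.sqrt_zero, integral_zero, mul_zero, zero_add]
    positivity
  obtain ⟨s₀⟩ := hSne
  have hlam1 : 1 ≤ lamW := by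
    have h1 := hWlow (Pi.single s₀ 1)
    have h2 := hWhigh (Pi.single s₀ 1)
    have hone : (Pi.single s₀ (1:ℝ)) ⬝ᵥ (Pi.single s₀ 1) = 1 := by
      simp [dotProduct, Pi.single_apply]
    rw [hone] at h1 h2
    rw [mul_one] at h2
    linarith
  have hlam0 : 0 < lamW := lt_of_lt_of_le one_pos hlam1
  have hNpos : (0:ℝ) < N := by exact_mod_cast hN
  have hpsd : ∀ u : S → ℝ, 0 ≤ u ⬝ᵥ W.mulVec u := fun u =>
    le_trans (Finset.sum_nonneg fun i _ => mul_self_nonneg _) (hWlow u)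
  set Cf : (Fin n → S) → S → ℝ :=
    fun t st => (1 / (N : ℝ)) * ((univ.filter fun i : Fin n => t i = st).card : ℝ) with hCf
  set c : ℝ := (n : ℝ) / N with hc
  set x : S → ℝ := Cf s with hx
  -- integrability oracle
  have key_int : ∀ g : (Fin n → S) → ℝ, Integrable (fun ω => g (fun i => σ i ω)) Pr := by
    intro g
    have hτ : Measurable (fun ω (i : Fin n) => σ i ω) :=
      measurable_pi_lambda _ (fun i => hmeas i)
    haveI : IsProbabilityMeasure (Pr.map (fun ω (i : Fin n) => σ i ω)) :=
      Measure.isProbabilityMeasure_map hτ.aemeasurable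
    have h1 : Integrable g (Pr.map (fun ω (i : Fin n) => σ i ω)) := Integrable.of_finite
    exact (integrable_map_measure (measurable_of_countable g).aestronglyMeasurable
      hτ.aemeasurable).mp h1
  -- total mass
  have hxsum : ∑ st, x st = c := by
    have h1 : ∑ st : S, (((univ : Finset (Fin n)).filter fun i => s i = st).card : ℝ) * 1
        = ∑ i : Fin n, (1:ℝ) := sum_fiberwise_card s (fun _ => 1)
    simp only [mul_one, Finset.sum_const, Finset.card_univ, Fintype.card_fin,
      nsmul_eq_mul] at h1
    simp only [hx, hCf]
    rw [← Finset.mul_sum, h1, hc]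
    ring
  -- mean of the indicator
  have hind_int : ∀ (i : Fin n) st,
      ∫ ω, (if σ i ω = st then (1:ℝ) else 0) ∂Pr = P (s i) st := by
    intro i st
    have hA : MeasurableSet {ω | σ i ω = st} := (hmeas i) (measurableSet_singleton st)
    have he : (fun ω => if σ i ω = st then (1:ℝ) else 0)
        = Set.indicator {ω | σ i ω = st} (fun _ => (1:ℝ)) := by
      funext ω; by_cases h : σ i ω = st <;> simp [Set.indicator_apply, h]
    rw [he, integral_indicator_const _ hA, measureReal_def, hlaw i st]
    simp
  have hZmean : ∀ (i : Fin n) st,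
      ∫ ω, ((if σ i ω = st then (1:ℝ) else 0) - P (s i) st) ∂Pr = 0 := by
    intro i st
    rw [integral_sub (key_int (fun t => if t i = st then (1:ℝ) else 0)) (integrable_const _),
      hind_int i st, integral_const]
    simp
  have hZzero : ∀ st (i j : Fin n), i ≠ j →
      ∫ ω, ((if σ i ω = st then (1:ℝ) else 0) - P (s i) st)
        * ((if σ j ω = st then (1:ℝ) else 0) - P (s j) st) ∂Pr = 0 := by
    intro st i j hij
    have hf : ∀ k : Fin n, Measurable (fun a : S => (if a = st then (1:ℝ) else 0) - P (s k) st) :=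
      fun k => measurable_of_countable _
    have hIF := (hindep.indepFun hij).comp (hf i) (hf j)
    have h2 : ∫ ω, ((if σ i ω = st then (1:ℝ) else 0) - P (s i) st)
          * ((if σ j ω = st then (1:ℝ) else 0) - P (s j) st) ∂Pr
        = (∫ ω, ((if σ i ω = st then (1:ℝ) else 0) - P (s i) st) ∂Pr)
          * (∫ ω, ((if σ j ω = st then (1:ℝ) else 0) - P (s j) st) ∂Pr) :=
      (show IndepFun ((fun a : S => (if a = st then (1:ℝ) else 0) - P (s i) st) ∘ σ i)
        ((fun a : S => (if a = st then (1:ℝ) else 0) - P (s j) st) ∘ σ j) Pr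
        from hIF).integral_mul_eq_mul_integral (((hf i).comp (hmeas i)).aestronglyMeasurable)
        (((hf j).comp (hmeas j)).aestronglyMeasurable)
    rw [h2, hZmean i st, hZmean j st, mul_zero]
  have hZsq : ∀ (i : Fin n) st,
      ∫ ω, ((if σ i ω = st then (1:ℝ) else 0) - P (s i) st)
        * ((if σ i ω = st then (1:ℝ) else 0) - P (s i) st) ∂Pr ≤ P (s i) st := by
    intro i st
    have hpt : ∀ ω, ((if σ i ω = st then (1:ℝ) else 0) - P (s i) st)
          * ((if σ i ω = st then (1:ℝ) else 0) - P (s i) st)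
        = (1 - 2 * P (s i) st) * (if σ i ω = st then (1:ℝ) else 0) + (P (s i) st)^2 := by
      intro ω; by_cases h : σ i ω = st <;> simp [h] <;> ring
    simp_rw [hpt]
    rw [integral_add ((key_int (fun t => if t i = st then (1:ℝ) else 0)).const_mul _)
      (integrable_const _), integral_const_mul, hind_int i st, integral_const]
    simp only [measureReal_def, measure_univ, ENNReal.toReal_one, smul_eq_mul, one_mul]
    nlinarith [sq_nonneg (P (s i) st)]
  -- mean vector after one step
  have hyst : ∀ st, (x ᵥ* P) st = (1/(N:ℝ)) * ∑ i, P (s i) st := by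
    intro st
    show ∑ s', x s' * P s' st = _
    calc ∑ s', x s' * P s' st
        = (1/(N:ℝ)) * ∑ s', (((univ : Finset (Fin n)).filter fun i => s i = s').card : ℝ)
            * P s' st := by
          rw [Finset.mul_sum]
          refine Finset.sum_congr rfl (fun s' _ => ?_)
          simp only [hx, hCf]; ring
      _ = (1/(N:ℝ)) * ∑ i, P (s i) st := by
          rw [sum_fiberwise_card s (fun s' => P s' st)]
  -- decomposition of the fluctuation
  have hdecomp : ∀ ω st, Cf (fun i => σ i ω) st - (x ᵥ* P) st
      = (1/(N:ℝ)) * ∑ i, ((if σ i ω = st then (1:ℝ) else 0) - P (s i) st) := by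
    intro ω st
    rw [hyst st, Finset.sum_sub_distrib, mul_sub]
    congr 1
    rw [show Cf (fun i => σ i ω) st
      = (1/(N:ℝ)) * (((univ : Finset (Fin n)).filter fun i => σ i ω = st).card : ℝ) from rfl,
      card_fiber_eq]
  -- variance bound
  have hvar : ∑ st, ∫ ω, (Cf (fun i => σ i ω) st - (x ᵥ* P) st)^2 ∂Pr
      ≤ (n:ℝ)/(N:ℝ)^2 := by
    have hper : ∀ st, ∫ ω, (Cf (fun i => σ i ω) st - (x ᵥ* P) st)^2 ∂Pr
        ≤ (1/(N:ℝ))^2 * ∑ i, P (s i) st := by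
      intro st
      have hrw : ∀ ω, (Cf (fun i => σ i ω) st - (x ᵥ* P) st)^2
          = (1/(N:ℝ))^2 * (∑ i, ((if σ i ω = st then (1:ℝ) else 0) - P (s i) st))^2 := by
        intro ω; rw [hdecomp ω st, mul_pow]
      simp_rw [hrw]
      rw [integral_const_mul]
      apply mul_le_mul_of_nonneg_left _ (by positivity)
      rw [integral_sq_sum Pr (fun i ω => (if σ i ω = st then (1:ℝ) else 0) - P (s i) st)
        (fun i j => key_int (fun t => ((if t i = st then (1:ℝ) else 0) - P (s i) st)
          * ((if t j = st then (1:ℝ) else 0) - P (s j) st)))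
        (fun i j hij => hZzero st i j hij)]
      exact Finset.sum_le_sum (fun i _ => hZsq i st)
    calc ∑ st, ∫ ω, (Cf (fun i => σ i ω) st - (x ᵥ* P) st)^2 ∂Pr
        ≤ ∑ st, (1/(N:ℝ))^2 * ∑ i, P (s i) st := Finset.sum_le_sum (fun st _ => hper st)
      _ = (1/(N:ℝ))^2 * ∑ i : Fin n, ∑ st, P (s i) st := by
          rw [← Finset.mul_sum, Finset.sum_comm]
      _ = (n:ℝ)/(N:ℝ)^2 := by
          simp only [hProw, Finset.sum_const, Finset.card_univ, Fintype.card_fin,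
            nsmul_eq_mul, mul_one]
          ring
  -- apply part B
  have hintQ : Integrable (fun ω => (fun st => Cf (fun i => σ i ω) st - (x ᵥ* P) st)
      ⬝ᵥ W.mulVec (fun st => Cf (fun i => σ i ω) st - (x ᵥ* P) st)) Pr :=
    key_int (fun t => (fun st => Cf t st - (x ᵥ* P) st)
      ⬝ᵥ W.mulVec (fun st => Cf t st - (x ᵥ* P) st))
  have hintS : Integrable (fun ω => Real.sqrt ((fun st => Cf (fun i => σ i ω) st - (x ᵥ* P) st)
      ⬝ᵥ W.mulVec (fun st => Cf (fun i => σ i ω) st - (x ᵥ* P) st))) Pr :=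
    key_int (fun t => Real.sqrt ((fun st => Cf t st - (x ᵥ* P) st)
      ⬝ᵥ W.mulVec (fun st => Cf t st - (x ᵥ* P) st)))
  have hintsum : Integrable (fun ω => ∑ st, (Cf (fun i => σ i ω) st - (x ᵥ* P) st)^2) Pr :=
    key_int (fun t => ∑ st, (Cf t st - (x ᵥ* P) st)^2)
  have hintst : ∀ st, Integrable (fun ω => (Cf (fun i => σ i ω) st - (x ᵥ* P) st)^2) Pr :=
    fun st => key_int (fun t => (Cf t st - (x ᵥ* P) st)^2)
  have hPB := partB Pr W lamW hWlow hWhigh hlam1 N n hN hn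
    (fun ω st => Cf (fun i => σ i ω) st - (x ᵥ* P) st) hintQ hintS hintsum hintst hvar
  have hPA := partA P Ξ W μ lamW hΞ hstat hWlow hWhigh hLyap hlam1 x c hxsum hμsum
  -- pointwise triangle inequality
  have htri : ∀ ω, Real.sqrt ((fun st => Cf (fun i => σ i ω) st - c * μ st)
        ⬝ᵥ W.mulVec (fun st => Cf (fun i => σ i ω) st - c * μ st))
      ≤ Real.sqrt ((fun st => Cf (fun i => σ i ω) st - (x ᵥ* P) st)
          ⬝ᵥ W.mulVec (fun st => Cf (fun i => σ i ω) st - (x ᵥ* P) st))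
        + Real.sqrt ((x ᵥ* P - c • μ) ⬝ᵥ W.mulVec (x ᵥ* P - c • μ)) := by
    intro ω
    have heq : (fun st => Cf (fun i => σ i ω) st - c * μ st)
        = (fun st => Cf (fun i => σ i ω) st - (x ᵥ* P) st) + (x ᵥ* P - c • μ) := by
      funext st
      simp only [Pi.add_apply, Pi.sub_apply, Pi.smul_apply, smul_eq_mul]
      ring
    rw [heq]
    exact quad_triangle W hWsym hpsd _ _
  -- assembly
  calc ∫ ω, Real.sqrt ((fun st => Cf (fun i => σ i ω) st - c * μ st)
        ⬝ᵥ W.mulVec (fun st => Cf (fun i => σ i ω) st - c * μ st)) ∂Pr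
      ≤ ∫ ω, (Real.sqrt ((fun st => Cf (fun i => σ i ω) st - (x ᵥ* P) st)
          ⬝ᵥ W.mulVec (fun st => Cf (fun i => σ i ω) st - (x ᵥ* P) st))
        + Real.sqrt ((x ᵥ* P - c • μ) ⬝ᵥ W.mulVec (x ᵥ* P - c • μ))) ∂Pr :=
        integral_mono_of_nonneg (Filter.Eventually.of_forall (fun ω => Real.sqrt_nonneg _))
          (hintS.add (integrable_const _)) (Filter.Eventually.of_forall htri)
    _ = (∫ ω, Real.sqrt ((fun st => Cf (fun i => σ i ω) st - (x ᵥ* P) st)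
          ⬝ᵥ W.mulVec (fun st => Cf (fun i => σ i ω) st - (x ᵥ* P) st)) ∂Pr)
        + Real.sqrt ((x ᵥ* P - c • μ) ⬝ᵥ W.mulVec (x ᵥ* P - c • μ)) := by
        rw [integral_add hintS (integrable_const _), integral_const]
        simp
    _ ≤ Real.sqrt lamW / Real.sqrt N
        + (1 - 1/(2*lamW)) * Real.sqrt ((x - c • μ) ⬝ᵥ W.mulVec (x - c • μ)) :=
        add_le_add hPB hPA
    _ ≤ (1 - 1/(2*lamW)) * Real.sqrt ((x - c • μ) ⬝ᵥ W.mulVec (x - c • μ))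
        + 2 * Real.sqrt lamW / Real.sqrt N := by
        have h1 : 0 ≤ Real.sqrt lamW / Real.sqrt N :=
          div_nonneg (Real.sqrt_nonneg _) (Real.sqrt_nonneg _)
        have h2 : 2 * Real.sqrt lamW / Real.sqrt N = 2 * (Real.sqrt lamW / Real.sqrt N) := by
          ring
        rw [h2]
        linarith
end
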